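/- Let K be a field, L a finite field extension of K, and H a finite-dimensional K-bialgebra such that L is a left H-module algebra via α and the canonical map can : L ⊗_K H → End_K(L) is bijective (i.e. L/K is H-Galois). Then H is cocommutative: τ ∘ Δ = Δ, where τ : H ⊗_K H → H ⊗_K H is the flip x ⊗ y ↦ y ⊗ x. -/

import Mathlib

open TensorProduct

section Defs

variable (K L H : Type) [Field K] [Field L] [Algebra K L] [Ring H] [Bialgebra K H]

/-- `L` is a left `H`-module algebra via `α`. -/
def IsModuleAlgebra (α : H →ₐ[K] Module.End K L) : Prop :=
  (∀ h : H, α h 1 = Coalgebra.counit (R := K) h • (1 : L)) ∧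
  ∀ h : H,
    (α h : L →ₗ[K] L) ∘ₗ LinearMap.mul' K L =
      LinearMap.mul' K L ∘ₗ
        TensorProduct.homTensorHomMap (RingHom.id K) L L L L
          (TensorProduct.map (α.toLinearMap : H →ₗ[K] (L →ₗ[K] L))
            (α.toLinearMap : H →ₗ[K] (L →ₗ[K] L)) (Coalgebra.comul (R := K) h))

noncomputable def lsmulLift (V M : Type) [AddCommGroup V] [Module K V] [AddCommGroup M]
    [Module K M] [Module L M] [IsScalarTower K L M] [SMulCommClass K L M]
    (φ : V →ₗ[K] M) : L ⊗[K] V →ₗ[K] M :=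
  TensorProduct.lift
    (LinearMap.mk₂ K (fun (x : L) (v : V) => x • φ v)
      (fun x x' v => add_smul x x' (φ v))
      (fun c x v => smul_assoc c x (φ v))
      (fun x v v' => by rw [map_add, smul_add])
      (fun c x v => by rw [map_smul, smul_comm]))

/-- The canonical (Galois) map `L ⊗[K] H →ₗ[K] End_K(L)`, `x ⊗ h ↦ (y ↦ x * α h y)`. -/
noncomputable def canMap (α : H →ₐ[K] Module.End K L) : L ⊗[K] H →ₗ[K] (L →ₗ[K] L) :=
  lsmulLift K L H (L →ₗ[K] L) (α.toLinearMap : H →ₗ[K] (L →ₗ[K] L))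

/-- The annihilator `J(L0)` of an intermediate field. -/
def Jann (α : H →ₐ[K] Module.End K L) (L0 : IntermediateField K L) : Submodule K H where
  carrier := {h : H | ∀ x ∈ L0, α h x = 0}
  add_mem' := by
    intro a b ha hb x hx
    simp [map_add, LinearMap.add_apply, ha x hx, hb x hx]
  zero_mem' := by intro x hx; simp
  smul_mem' := by
    intro c a ha x hx
    simp [map_smul, LinearMap.smul_apply, ha x hx]

/-- The map `H →ₗ[K] Hom_K(L0, L)`, `h ↦ (α h)|_{L0}`. -/
def resMap (α : H →ₐ[K] Module.End K L) (L0 : IntermediateField K L) :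
    H →ₗ[K] (↥L0 →ₗ[K] L) where
  toFun h := (α h : L →ₗ[K] L) ∘ₗ L0.val.toLinearMap
  map_add' h h' := by ext x; simp
  map_smul' c h := by ext x; simp

lemma Jann_le_ker (α : H →ₐ[K] Module.End K L) (L0 : IntermediateField K L) :
    Jann K L H α L0 ≤ LinearMap.ker (resMap K L H α L0) := by
  intro h hh
  rw [LinearMap.mem_ker]
  ext x
  exact hh x x.2

/-- The induced canonical map `L ⊗[K] (H / J(L0)) →ₗ[K] Hom_K(L0, L)`. -/
noncomputable def can0 (α : H →ₐ[K] Module.End K L) (L0 : IntermediateField K L) :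
    L ⊗[K] (H ⧸ Jann K L H α L0) →ₗ[K] (↥L0 →ₗ[K] L) :=
  lsmulLift K L (H ⧸ Jann K L H α L0) (↥L0 →ₗ[K] L)
    ((Jann K L H α L0).liftQ (resMap K L H α L0) (Jann_le_ker K L H α L0))

/-- `L0` is an `H`-subextension: the induced canonical map is injective. -/
def IsHSubextension (α : H →ₐ[K] Module.End K L) (L0 : IntermediateField K L) : Prop :=
  Function.Injective (can0 K L H α L0)

end Defs

section Proof

variable (K L H : Type) [Field K] [Field L] [Algebra K L] [Ring H] [Bialgebra K H]

lemma canMap_tmul (α : H →ₐ[K] Module.End K L) (x : L) (h : H) (y : L) :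
    canMap K L H α (x ⊗ₜ[K] h) y = x * α h y := by
  simp [canMap, lsmulLift, smul_eq_mul]

/-- `Ψ t u v = mul (homTensorHomMap (map α α t) (u ⊗ v))`, exposed as a function of `t`. -/
noncomputable def PsiMap (α : H →ₐ[K] Module.End K L) (u v : L) : H ⊗[K] H →ₗ[K] L :=
  (LinearMap.mul' K L) ∘ₗ
    ((LinearMap.applyₗ (u ⊗ₜ[K] v)).comp
      ((TensorProduct.homTensorHomMap (RingHom.id K) L L L L).comp
        (TensorProduct.map (α.toLinearMap : H →ₗ[K] (L →ₗ[K] L))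
          (α.toLinearMap : H →ₗ[K] (L →ₗ[K] L)))))

lemma PsiMap_tmul (α : H →ₐ[K] Module.End K L) (u v : L) (h k : H) :
    PsiMap K L H α u v (h ⊗ₜ[K] k) = α h u * α k v := by
  simp [PsiMap, LinearMap.mul'_apply]

lemma PsiMap_comm (α : H →ₐ[K] Module.End K L) (u v : L) (t : H ⊗[K] H) :
    PsiMap K L H α u v ((TensorProduct.comm K H H) t) = PsiMap K L H α v u t := by
  induction t using TensorProduct.induction_on with
  | zero => simp
  | tmul h k => simp [PsiMap_tmul, mul_comm]
  | add a b ha hb => simp [map_add, ha, hb]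

/-- `Φ t u = Σ α t₁ u ⊗ t₂`. -/
noncomputable def PhiMap (α : H →ₐ[K] Module.End K L) : H ⊗[K] H →ₗ[K] (L →ₗ[K] L ⊗[K] H) :=
  (TensorProduct.rTensorHomToHomRTensor (RingHom.id K) L L H).comp
    (LinearMap.rTensor H (α.toLinearMap : H →ₗ[K] (L →ₗ[K] L)))

lemma PhiMap_tmul (α : H →ₐ[K] Module.End K L) (h k : H) (u : L) :
    PhiMap K L H α (h ⊗ₜ[K] k) u = α h u ⊗ₜ[K] k := by
  simp [PhiMap, LinearMap.rTensor_tmul, TensorProduct.rTensorHomToHomRTensor_apply]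

lemma can_PhiMap (α : H →ₐ[K] Module.End K L) (t : H ⊗[K] H) (u v : L) :
    canMap K L H α (PhiMap K L H α t u) v = PsiMap K L H α u v t := by
  induction t using TensorProduct.induction_on with
  | zero => simp
  | tmul h k => rw [PhiMap_tmul, canMap_tmul, PsiMap_tmul]
  | add a b ha hb => simp only [map_add, LinearMap.add_apply, ha, hb]

lemma alpha_injective (α : H →ₐ[K] Module.End K L)
    (hGal : Function.Bijective (canMap K L H α)) :
    Function.Injective (α.toLinearMap : H →ₗ[K] (L →ₗ[K] L)) := by
  have h1 : Function.Injective (fun h : H => (1 : L) ⊗ₜ[K] h) := by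
    have : (fun h : H => (1 : L) ⊗ₜ[K] h) =
        (LinearMap.rTensor H (Algebra.linearMap K L)) ∘
          (TensorProduct.lid K H).symm := by
      funext h
      simp [TensorProduct.lid_symm_apply]
    rw [this]
    exact (Module.Flat.rTensor_preserves_injective_linearMap (M := H)
      (Algebra.linearMap K L) (algebraMap K L).injective).comp
      (TensorProduct.lid K H).symm.injective
  intro a b hab
  apply h1
  apply hGal.injective
  ext v
  simpa [canMap_tmul] using congrArg (fun f : Module.End K L => f v) hab

theorem cocommutative_of_isHGalois' [FiniteDimensional K L] [FiniteDimensional K H]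
    (α : H →ₐ[K] Module.End K L) (hMA : IsModuleAlgebra K L H α)
    (hGal : Function.Bijective (canMap K L H α)) :
    (TensorProduct.comm K H H).toLinearMap ∘ₗ (Coalgebra.comul (R := K) (A := H)) =
      Coalgebra.comul (R := K) (A := H) := by
  -- Φ is injective
  have hPhi : Function.Injective (PhiMap K L H α) := by
    have h2 : Function.Injective (TensorProduct.rTensorHomToHomRTensor (RingHom.id K) L L H) := by
      rw [← rTensorHomEquivHomRTensor_toLinearMap]
      exact (rTensorHomEquivHomRTensor K L L H).injective
    exact h2.comp (Module.Flat.rTensor_preserves_injective_linearMap _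
      (alpha_injective K L H α hGal))
  ext h
  apply hPhi
  apply LinearMap.ext
  intro u
  apply hGal.injective
  ext v
  simp only [LinearMap.comp_apply, LinearEquiv.coe_coe]
  rw [can_PhiMap, can_PhiMap, PsiMap_comm]
  -- now: Ψ (Δ h) v u = Ψ (Δ h) u v, both equal α h (v*u) = α h (u*v)
  have key : ∀ x y : L, PsiMap K L H α x y (Coalgebra.comul (R := K) h) = α h (x * y) := by
    intro x y
    have := congrArg (fun f : L ⊗[K] L →ₗ[K] L => f (x ⊗ₜ[K] y)) (hMA.2 h)
    simpa [PsiMap, LinearMap.mul'_apply] using this.symm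
  rw [key, key, mul_comm]

end Proof

section Statement

variable (K L H : Type) [Field K] [Field L] [Algebra K L] [Ring H] [Bialgebra K H]

/-- If a finite extension `L/K` is `H`-Galois for a finite-dimensional `K`-bialgebra `H`,
then `H` is cocommutative: `τ ∘ Δ = Δ`. -/
theorem cocommutative_of_isHGalois [FiniteDimensional K L] [FiniteDimensional K H]
    (α : H →ₐ[K] Module.End K L) (hMA : IsModuleAlgebra K L H α)
    (hGal : Function.Bijective (canMap K L H α)) :
    (TensorProduct.comm K H H).toLinearMap ∘ₗ (Coalgebra.comul (R := K) (A := H)) =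
      Coalgebra.comul (R := K) (A := H) :=
  cocommutative_of_isHGalois' K L H α hMA hGal

end Statement
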